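/- arXiv:2208.08213 — 4 statements merged into one kernel-verified Lean document; each statement's English description precedes it below -/
import Mathlib

section
/- Let G be a finite simple graph. Call a vertex v good if at least deg(v)/3 of its neighbors have degree at most deg(v), and call an edge of G good if at least one of its two endpoints is a good vertex. Then at least half of the edges of G are good; equivalently, the number of edges of G both of whose endpoints fail to be good is at most |E(G)|/2. -/
/-!
Compare each vertex `v` with its neighbours through the degree: let `L v` count the neighbours
of degree at most `deg v` and `H v` those of larger degree, so `L v + H v = deg v`. Every edge
whose endpoints are both bad is counted in `L v` for its endpoint `v` of larger degree, which is bad;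
hence `#bad ≤ ∑_{v bad} L v`. A bad vertex has `3 L v < deg v`, i.e. `2 L v < H v`, and
`∑_v H v ≤ |E|` because an edge is counted in `H` only at its endpoint of smaller degree.
-/

namespace SimpleGraph

open Finset

variable {V α : Type*} [Fintype V] (G : SimpleGraph V) [DecidableRel G.Adj]

theorem sum_card_neighbor_lt_le_card_edgeFinset [Preorder α] [DecidableLT α] (f : V → α) :
    ∑ v, #{u ∈ G.neighborFinset v | f v < f u} ≤ #G.edgeFinset := by
  rw [← card_sigma]
  refine card_le_card_of_injOn (fun x => s(x.1, x.2)) (fun x hx => ?_) ?_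
  · simp only [mem_coe, mem_sigma, mem_filter, mem_neighborFinset] at hx
    exact G.mem_edgeFinset.2 hx.2.1
  · rintro ⟨a, b⟩ hab ⟨c, d⟩ hcd h
    simp only [mem_coe, mem_sigma, mem_filter] at hab hcd
    rcases Sym2.eq_iff.1 h with ⟨rfl, rfl⟩ | ⟨rfl, rfl⟩
    · rfl
    · exact absurd hab.2.2 hcd.2.2.asymm

theorem card_le_sum_card_neighbor_le [LinearOrder α] (f : V → α) {s : Finset (Sym2 V)}
    {t : Finset V} (hs : s ⊆ G.edgeFinset) (ht : ∀ e ∈ s, ∀ v ∈ e, v ∈ t) :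
    #s ≤ ∑ v ∈ t, #{u ∈ G.neighborFinset v | f u ≤ f v} := by
  rw [← card_sigma]
  refine card_le_card_of_surjOn (fun x => s(x.1, x.2)) (fun e he => ?_)
  induction e using Sym2.ind with
  | _ a b =>
    have hadj : G.Adj a b := G.mem_edgeFinset.1 (hs he)
    have hat : a ∈ t := ht _ he a (Sym2.mem_mk_left a b)
    have hbt : b ∈ t := ht _ he b (Sym2.mem_mk_right a b)
    rcases le_total (f a) (f b) with hle | hle
    · refine ⟨⟨b, a⟩, ?_, Sym2.eq_swap⟩
      simpa [hbt, hadj.symm] using hle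
    · refine ⟨⟨a, b⟩, ?_, rfl⟩
      simpa [hat, hadj] using hle

theorem card_neighbor_le_add_card_neighbor_lt [LinearOrder α] (f : V → α) (v : V) :
    #{u ∈ G.neighborFinset v | f u ≤ f v} + #{u ∈ G.neighborFinset v | f v < f u} =
      G.degree v := by
  simp only [← not_le, card_filter_add_card_filter_not, card_neighborFinset_eq_degree]

end SimpleGraph

open Classical in
/-- At least half of the edges of a finite simple graph are "good": an edge is good if at
least one endpoint `v` is good, i.e. at least `deg(v)/3` of its neighbors have degree at
most `deg(v)`. Equivalently, the number of edges both of whose endpoints are not good is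
at most half the number of edges. -/
theorem stmt0 {V : Type*} [Fintype V] [DecidableEq V] (G : SimpleGraph V)
    [DecidableRel G.Adj] :
    2 * (G.edgeFinset.filter (fun e =>
        ∀ v ∈ e, ¬ (G.degree v ≤ 3 * ((G.neighborFinset v).filter
          (fun u => G.degree u ≤ G.degree v)).card))).card
      ≤ G.edgeFinset.card := by
  set d : V → ℕ := fun v => G.degree v
  set L : V → ℕ := fun v =>
    ((G.neighborFinset v).filter (fun u => G.degree u ≤ G.degree v)).card
  set H : V → ℕ := fun v =>
    ((G.neighborFinset v).filter (fun u => G.degree v < G.degree u)).card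
  set bad := Finset.univ.filter (fun v => ¬ G.degree v ≤ 3 * L v)
  have hbad : ∀ v ∈ bad, 2 * L v ≤ H v := fun v hv => by
    have hsum : L v + H v = G.degree v := G.card_neighbor_le_add_card_neighbor_lt d v
    have hv : ¬ G.degree v ≤ 3 * L v := (Finset.mem_filter.1 hv).2
    omega
  calc _ ≤ 2 * ∑ v ∈ bad, L v := by
        gcongr
        refine G.card_le_sum_card_neighbor_le d (Finset.filter_subset _ _) ?_
        intro e he v hv
        exact Finset.mem_filter.2 ⟨Finset.mem_univ v, (Finset.mem_filter.1 he).2 v hv⟩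
    _ ≤ ∑ v ∈ bad, H v := by
        rw [Finset.mul_sum]
        exact Finset.sum_le_sum hbad
    _ ≤ ∑ v, H v := Finset.sum_le_sum_of_subset (Finset.subset_univ bad)
    _ ≤ G.edgeFinset.card := G.sum_card_neighbor_lt_le_card_edgeFinset d
end

section
/- Let G be a finite simple graph. For every vertex v let N2+(v) = {u ∈ V : dist(u,v) ≤ 2} be the closed 2-hop neighborhood of v, and call v good if the sum over u ∈ N2+(v) of 1/(deg(u)+1) is at least 1/2. Then at least half of the vertices of G are good, i.e., the number of vertices that are not good is at most |V(G)|/2. -/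
/-!
Put `x u = 1/(deg u + 1)` and let `s w` be the sum of `x` over the closed neighbourhood `N[w]`.
Double counting gives `∑_w s w = ∑_u |N[u]| x u = |V|`, and more precisely, for any set `A`,
`∑_{w ∈ A} s w = ∑_u |N[u] ∩ A| x u ≤ |N[A]|`. Taking `A = {w | s w ≥ 1/2}` we get
`|V| ≤ |N[A]| + |V|/2`. A vertex `v ∈ N[A]`, say `v ∈ N[w]` with `w ∈ A`, is good because
`N[w]` lies in the 2-hop neighbourhood of `v`; so the bad vertices lie outside `N[A]` and there
are at most `|V|/2` of them.
-/

open Finset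

namespace SimpleGraph

variable {V : Type*} (G : SimpleGraph V) [Fintype V] [DecidableRel G.Adj]

noncomputable def caroWeiWeight (u : V) : ℝ := 1 / (G.degree u + 1)

lemma caroWeiWeight_nonneg (u : V) : 0 ≤ G.caroWeiWeight u := by
  unfold caroWeiWeight
  positivity

variable [DecidableEq V]

def closedNeighborFinset (v : V) : Finset V := insert v (G.neighborFinset v)

noncomputable def closedNeighborWeight (w : V) : ℝ :=
  ∑ u ∈ G.closedNeighborFinset w, G.caroWeiWeight u

variable {G}

lemma mem_closedNeighborFinset {v w : V} :
    w ∈ G.closedNeighborFinset v ↔ w = v ∨ G.Adj v w := by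
  simp [closedNeighborFinset]

lemma mem_closedNeighborFinset_comm {v w : V} :
    w ∈ G.closedNeighborFinset v ↔ v ∈ G.closedNeighborFinset w := by
  rw [mem_closedNeighborFinset, mem_closedNeighborFinset, eq_comm, G.adj_comm]

lemma exists_walk_length_le_one_of_mem_closedNeighborFinset {v w : V}
    (h : w ∈ G.closedNeighborFinset v) : ∃ p : G.Walk v w, p.length ≤ 1 := by
  rcases mem_closedNeighborFinset.1 h with rfl | hadj
  · exact ⟨.nil, by simp⟩
  · exact ⟨hadj.toWalk, by simp⟩

open Classical in
lemma closedNeighborFinset_subset_twoHop {v w : V} (h : v ∈ G.closedNeighborFinset w) :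
    G.closedNeighborFinset w ⊆ univ.filter fun u => ∃ p : G.Walk u v, p.length ≤ 2 := by
  intro u hu
  obtain ⟨p, hp⟩ := exists_walk_length_le_one_of_mem_closedNeighborFinset hu
  obtain ⟨q, hq⟩ := exists_walk_length_le_one_of_mem_closedNeighborFinset h
  refine mem_filter.2 ⟨mem_univ u, p.reverse.append q, ?_⟩
  rw [Walk.length_append, Walk.length_reverse]
  omega

variable (G)

lemma card_closedNeighborFinset (v : V) : #(G.closedNeighborFinset v) = G.degree v + 1 := by
  rw [closedNeighborFinset, card_insert_of_notMem (by simp), card_neighborFinset_eq_degree]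

lemma card_closedNeighborFinset_mul_caroWeiWeight (u : V) :
    #(G.closedNeighborFinset u) * G.caroWeiWeight u = 1 := by
  rw [card_closedNeighborFinset, caroWeiWeight]
  push_cast
  field_simp

lemma sum_sum_closedNeighborFinset_comm {M : Type*} [AddCommMonoid M] (A : Finset V)
    (f : V → M) :
    ∑ w ∈ A, ∑ u ∈ G.closedNeighborFinset w, f u =
      ∑ u ∈ A.biUnion G.closedNeighborFinset, #(A ∩ G.closedNeighborFinset u) • f u := by
  simp_rw [← sum_const]
  refine sum_comm' fun w u => ?_
  rw [mem_inter, mem_biUnion, mem_closedNeighborFinset_comm (v := u)]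
  exact ⟨fun h => ⟨h, w, h⟩, fun h => h.1⟩

lemma sum_closedNeighborWeight_le_card_biUnion (A : Finset V) :
    ∑ w ∈ A, G.closedNeighborWeight w ≤ #(A.biUnion G.closedNeighborFinset) := by
  unfold closedNeighborWeight
  rw [sum_sum_closedNeighborFinset_comm]
  refine (sum_le_card_nsmul _ _ 1 fun u _ => ?_).trans (by simp)
  calc #(A ∩ G.closedNeighborFinset u) • G.caroWeiWeight u
      ≤ #(G.closedNeighborFinset u) * G.caroWeiWeight u := by
        rw [nsmul_eq_mul]
        gcongr
        · exact G.caroWeiWeight_nonneg u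
        · exact inter_subset_right
    _ = 1 := G.card_closedNeighborFinset_mul_caroWeiWeight u

lemma sum_closedNeighborWeight : ∑ w, G.closedNeighborWeight w = Fintype.card V := by
  unfold closedNeighborWeight
  have hcover : univ.biUnion G.closedNeighborFinset = univ :=
    eq_univ_of_forall fun v => mem_biUnion.2 ⟨v, mem_univ v, mem_insert_self v _⟩
  simp [sum_sum_closedNeighborFinset_comm, hcover, card_closedNeighborFinset_mul_caroWeiWeight]

lemma card_univ_sdiff_biUnion_le {c : ℝ} (hc : 0 ≤ c) :
    (#(univ \ (univ.filter fun w => c ≤ G.closedNeighborWeight w).biUnion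
      G.closedNeighborFinset) : ℝ) ≤ c * Fintype.card V := by
  set A := univ.filter fun w => c ≤ G.closedNeighborWeight w
  set T := A.biUnion G.closedNeighborFinset
  have hlight : ∑ w ∈ univ.filter (fun w => ¬ c ≤ G.closedNeighborWeight w),
      G.closedNeighborWeight w ≤ c * Fintype.card V :=
    calc _ ≤ ∑ w ∈ univ.filter (fun w => ¬ c ≤ G.closedNeighborWeight w), c :=
          sum_le_sum fun w hw => (not_le.1 (mem_filter.1 hw).2).le
      _ ≤ c * Fintype.card V := by
          rw [sum_const, nsmul_eq_mul, mul_comm]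
          gcongr
          exact_mod_cast card_le_univ _
  have htotal : (Fintype.card V : ℝ) ≤ #T + c * Fintype.card V := by
    calc (Fintype.card V : ℝ) = ∑ w, G.closedNeighborWeight w := G.sum_closedNeighborWeight.symm
      _ = ∑ w ∈ A, G.closedNeighborWeight w + ∑ w ∈ univ.filter
            (fun w => ¬ c ≤ G.closedNeighborWeight w), G.closedNeighborWeight w :=
          (sum_filter_add_sum_filter_not univ _ _).symm
      _ ≤ #T + c * Fintype.card V :=
          add_le_add (G.sum_closedNeighborWeight_le_card_biUnion A) hlight
  have hcompl : (#(univ \ T) : ℝ) + #T = Fintype.card V := by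
    exact_mod_cast card_sdiff_add_card_eq_card (subset_univ T)
  linarith

open Classical in
variable {G} in
lemma notMem_biUnion_of_not_le_twoHop_sum {c : ℝ} {v : V}
    (hv : ¬ c ≤ ∑ u ∈ univ.filter (fun u => ∃ p : G.Walk u v, p.length ≤ 2), G.caroWeiWeight u) :
    v ∉ (univ.filter fun w => c ≤ G.closedNeighborWeight w).biUnion G.closedNeighborFinset := by
  simp only [mem_biUnion, mem_filter, mem_univ, true_and, not_exists, not_and]
  intro w hw hvw
  exact hv <| hw.trans <| sum_le_sum_of_subset_of_nonneg
    (closedNeighborFinset_subset_twoHop hvw) fun u _ _ => G.caroWeiWeight_nonneg u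

end SimpleGraph

open Classical in
/-- Call a vertex `v` good if `∑_{u : dist(u,v) ≤ 2} 1/(deg(u)+1) ≥ 1/2`, where the sum is
over the closed 2-hop neighborhood of `v` (vertices joined to `v` by a walk of length at
most 2). Then at most half of the vertices fail to be good. -/
theorem stmt1 {V : Type*} [Fintype V] (G : SimpleGraph V) [DecidableRel G.Adj] :
    2 * (Finset.univ.filter (fun v : V =>
        ¬ ((1 : ℝ) / 2 ≤
          ∑ u ∈ Finset.univ.filter (fun u : V => ∃ p : G.Walk u v, p.length ≤ 2),
            (1 : ℝ) / (G.degree u + 1)))).card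
      ≤ Fintype.card V := by
  classical
  set T := (univ.filter fun w => (1 / 2 : ℝ) ≤ G.closedNeighborWeight w).biUnion
    G.closedNeighborFinset
  have hT : (#(univ \ T) : ℝ) ≤ 1 / 2 * Fintype.card V :=
    G.card_univ_sdiff_biUnion_le (by norm_num)
  calc _ ≤ 2 * #(univ \ T) := Nat.mul_le_mul_left 2 <| card_le_card fun v hv =>
        mem_sdiff.2 ⟨mem_univ v, SimpleGraph.notMem_biUnion_of_not_le_twoHop_sum (mem_filter.1 hv).2⟩
    _ ≤ Fintype.card V := by
        have : (2 * #(univ \ T) : ℝ) ≤ Fintype.card V := by linarith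
        exact_mod_cast this
end

section
/- Let C ≥ 2 and q ≥ 1 be integers and let s be an integer with s ≥ 8·ln C. Then binom(C·q, s·q) · exp(−s²·q/4) < exp(−s²·q/8), where binom(n,k) denotes the binomial coefficient (which equals 0 when k > n). -/
/-!
Bounding `binom(n, k) ≤ (e n / k)^k` gives `binom(C q, s q) ≤ (e C / s)^(s q)`. The hypothesis
`s ≥ 8 ln C` (with `C ≥ 2`) forces `s > e` and `C ≤ exp (s / 8)`, so `e C / s < exp (s / 8)` and
the binomial coefficient is less than `exp (s² q / 8)`, which the factor `exp (-s² q / 4)` halves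
in the exponent.
-/

open Real

namespace Nat

theorem choose_le_exp_one_mul_div_pow (n k : ℕ) :
    (n.choose k : ℝ) ≤ (exp 1 * n / k) ^ k := by
  rcases k.eq_zero_or_pos with rfl | hk
  · simp
  have hk' : (0 : ℝ) < k := mod_cast hk
  calc (n.choose k : ℝ) ≤ (n : ℝ) ^ k / k ! := choose_le_pow_div k n
    _ = (n / k : ℝ) ^ k * ((k : ℝ) ^ k / k !) := by rw [div_pow]; field_simp
    _ ≤ (n / k : ℝ) ^ k * exp k := by gcongr; exact pow_div_factorial_le_exp _ hk'.le k
    _ = (exp 1 * n / k) ^ k := by rw [← exp_one_pow]; ring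

theorem choose_mul_le_exp_one_mul_div_pow (C s q : ℕ) (hs : 0 < s) :
    ((C * q).choose (s * q) : ℝ) ≤ (exp 1 * C / s) ^ (s * q) := by
  rcases q.eq_zero_or_pos with rfl | hq
  · simp
  have hqR : (q : ℝ) ≠ 0 := by positivity
  have hsR : (s : ℝ) ≠ 0 := by positivity
  convert choose_le_exp_one_mul_div_pow (C * q) (s * q) using 2
  push_cast
  field_simp

end Nat

/-- For integers `C ≥ 2`, `q ≥ 1` and an integer `s ≥ 8 ln C`, we have
`binom(C·q, s·q) · exp(−s²·q/4) < exp(−s²·q/8)`. -/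
theorem stmt6 (C q s : ℕ) (hC : 2 ≤ C) (hq : 1 ≤ q)
    (hs : 8 * Real.log C ≤ (s : ℝ)) :
    ((C * q).choose (s * q) : ℝ) * Real.exp (-((s : ℝ) ^ 2 * q) / 4) <
      Real.exp (-((s : ℝ) ^ 2 * q) / 8) := by
  have hC_pos : (0 : ℝ) < C := by positivity
  have hs_gt : exp 1 < s := by
    have : log 2 ≤ log C := log_le_log (by norm_num) (mod_cast hC)
    linarith [exp_one_lt_d9, log_two_gt_d9]
  have hs_pos : (0 : ℝ) < s := (exp_pos 1).trans hs_gt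
  have hC_le : (C : ℝ) ≤ exp (s / 8) := (log_le_iff_le_exp hC_pos).1 (by linarith)
  have hbase : exp 1 * C / s < exp (s / 8) := by
    rw [div_lt_iff₀ hs_pos]
    calc exp 1 * C < s * C := by gcongr
      _ ≤ exp (s / 8) * s := by rw [mul_comm]; gcongr
  have hexp : s * q ≠ 0 := Nat.mul_ne_zero (by exact_mod_cast hs_pos.ne') (by omega)
  have hchoose : ((C * q).choose (s * q) : ℝ) < exp ((s : ℝ) ^ 2 * q / 8) :=
    calc ((C * q).choose (s * q) : ℝ) ≤ (exp 1 * C / s) ^ (s * q) :=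
          Nat.choose_mul_le_exp_one_mul_div_pow C s q (mod_cast hs_pos)
      _ < exp (s / 8) ^ (s * q) := pow_lt_pow_left₀ hbase (by positivity) hexp
      _ = exp ((s : ℝ) ^ 2 * q / 8) := by rw [← exp_nat_mul]; push_cast; ring_nf
  calc ((C * q).choose (s * q) : ℝ) * exp (-((s : ℝ) ^ 2 * q) / 4)
      < exp ((s : ℝ) ^ 2 * q / 8) * exp (-((s : ℝ) ^ 2 * q) / 4) := by gcongr
    _ = exp (-((s : ℝ) ^ 2 * q) / 8) := by rw [← exp_add]; ring_nf
end

section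
/- Let G be a finite simple graph and suppose each edge e = {u,v} of G is marked independently with probability exactly 1/(4·(deg(u)+deg(v))); that is, the events {e is marked}, for e ranging over the edges of G, are mutually independent with these probabilities. Let v be a vertex with deg(v) ≥ 1 such that at least deg(v)/3 of the neighbors of v have degree at most deg(v). Then with probability at least 1/100 there exists an edge e incident to v such that e is marked and no other edge sharing an endpoint with e is marked. -/
/-!
Every edge at a vertex `x` is marked with probability at most `1/(4 deg x)`, so the expected
number of marked edges at `x` is at most `1/4`. By independence, an edge `vu` is then marked
while no adjacent edge is with probability at least `P(vu marked) · (1 - 1/4 - 1/4)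
= 1/(8(deg v + deg u))`, which is at least `1/(16 deg v)` when `deg u ≤ deg v`. These events are
disjoint for distinct neighbours `u`, and there are at least `deg v / 3` such neighbours, so the
probability is at least `1/48`.
-/

open MeasureTheory ProbabilityTheory Finset
open scoped ENNReal

theorem ENNReal.one_sub_sum_le_prod_one_sub {ι : Type*} (s : Finset ι) (f : ι → ℝ≥0∞) :
    1 - ∑ i ∈ s, f i ≤ ∏ i ∈ s, (1 - f i) := by
  induction s using Finset.cons_induction with
  | empty => simp
  | cons a s _ ih =>
    rw [sum_cons, prod_cons]
    have hne : 1 - f a ≠ ∞ := ne_top_of_le_ne_top one_ne_top tsub_le_self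
    calc 1 - (f a + ∑ i ∈ s, f i) = (1 - f a) - ∑ i ∈ s, f i := tsub_add_eq_tsub_tsub ..
      _ ≤ (1 - f a) - (1 - f a) * ∑ i ∈ s, f i :=
          tsub_le_tsub_left (mul_le_of_le_one_left' tsub_le_self) _
      _ = (1 - f a) * (1 - ∑ i ∈ s, f i) := by rw [ENNReal.mul_sub fun _ _ ↦ hne, mul_one]
      _ ≤ (1 - f a) * ∏ i ∈ s, (1 - f i) := mul_le_mul_right ih _

theorem ProbabilityTheory.iIndepSet.measure_inter_biInter_compl {ι Ω : Type*}
    [MeasurableSpace Ω] {μ : Measure Ω} {s : ι → Set Ω} (h : iIndepSet s μ)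
    (hs : ∀ i, MeasurableSet (s i)) {i : ι} {t : Finset ι} (hi : i ∉ t) :
    μ (s i ∩ ⋂ j ∈ t, (s j)ᶜ) = μ (s i) * ∏ j ∈ t, (1 - μ (s j)) := by
  classical
  have := h.isProbabilityMeasure
  set g : ι → Set Ω := fun j ↦ if j = i then s i else (s j)ᶜ
  have hg : s i ∩ ⋂ j ∈ t, (s j)ᶜ = ⋂ j ∈ insert i t, g j := by
    rw [set_biInter_insert]
    congr 1
    · simp [g]
    · exact Set.iInter₂_congr fun j hj ↦ by simp [g, ne_of_mem_of_not_mem hj hi]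
  rw [hg, ((iIndepSet_iff_iIndep _ _).1 h).meas_biInter, prod_insert hi]
  · rw [show g i = s i from if_pos rfl]
    exact congrArg _ (prod_congr rfl fun j hj ↦ by
      simp [g, ne_of_mem_of_not_mem hj hi, prob_compl_eq_one_sub (hs j)])
  · intro j _
    have hmem := MeasurableSpace.measurableSet_generateFrom (Set.mem_singleton (s j))
    by_cases hj : j = i
    · subst hj
      simpa [g] using hmem
    · simpa [g, hj] using hmem.compl

namespace SimpleGraph

variable {V : Type*} [Fintype V] [DecidableEq V] (G : SimpleGraph V) [DecidableRel G.Adj]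

def adjacentEdges (e : Sym2 V) : Finset G.edgeSet :=
  {f | f.1 ≠ e ∧ ∃ x, x ∈ f.1 ∧ x ∈ e}

lemma mem_adjacentEdges {e : Sym2 V} {f : G.edgeSet} :
    f ∈ G.adjacentEdges e ↔ f.1 ≠ e ∧ ∃ x, x ∈ f.1 ∧ x ∈ e := by
  simp [adjacentEdges]

variable {G} {p : Sym2 V → ℝ≥0∞}

lemma sum_incidenceFinset_le
    (hp : ∀ x y, G.Adj x y → p s(x, y) ≤ 1 / (4 * (G.degree x + G.degree y : ℝ≥0∞)))
    (x : V) : ∑ e ∈ G.incidenceFinset x, p e ≤ 1 / 4 := by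
  have hle : ∀ e ∈ G.incidenceFinset x, p e ≤ 1 / (4 * (G.degree x : ℝ≥0∞)) := by
    intro e he
    obtain ⟨he, hx⟩ := (G.mem_incidenceFinset x e).1 he
    obtain ⟨y, rfl⟩ := Sym2.mem_iff_exists.1 hx
    refine (hp x y he).trans ?_
    gcongr
    exact le_self_add
  calc ∑ e ∈ G.incidenceFinset x, p e
      ≤ G.degree x * (1 / (4 * (G.degree x : ℝ≥0∞))) := by
        simpa [card_incidenceFinset_eq_degree] using sum_le_card_nsmul _ _ _ hle
    _ ≤ 1 / 4 := by
        rcases Nat.eq_zero_or_pos (G.degree x) with h | h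
        · simp [h]
        · rw [one_div, ENNReal.mul_inv (by simp) (by simp), mul_left_comm,
            ENNReal.mul_inv_cancel (by simp [h.ne']) (by simp), mul_one, one_div]

lemma sum_adjacentEdges_le
    (hp : ∀ x y, G.Adj x y → p s(x, y) ≤ 1 / (4 * (G.degree x + G.degree y : ℝ≥0∞)))
    (x y : V) : ∑ f ∈ G.adjacentEdges s(x, y), p f ≤ 1 / 2 := by
  have hsub : (G.adjacentEdges s(x, y)).map (Function.Embedding.subtype _) ⊆
      G.incidenceFinset x ∪ G.incidenceFinset y := by
    intro e he
    obtain ⟨f, hf, rfl⟩ := mem_map.1 he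
    obtain ⟨-, z, hzf, hz⟩ := G.mem_adjacentEdges.1 hf
    rcases Sym2.mem_iff.1 hz with rfl | rfl
    · exact mem_union_left _ ((G.mem_incidenceFinset _ _).2 ⟨f.2, hzf⟩)
    · exact mem_union_right _ ((G.mem_incidenceFinset _ _).2 ⟨f.2, hzf⟩)
  calc ∑ f ∈ G.adjacentEdges s(x, y), p f
      = ∑ e ∈ (G.adjacentEdges s(x, y)).map (Function.Embedding.subtype _), p e :=
        (sum_map _ (Function.Embedding.subtype _) p).symm
    _ ≤ ∑ e ∈ G.incidenceFinset x ∪ G.incidenceFinset y, p e := sum_le_sum_of_subset hsub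
    _ ≤ ∑ e ∈ G.incidenceFinset x, p e + ∑ e ∈ G.incidenceFinset y, p e := by
        rw [← sum_union_inter]; exact le_self_add
    _ ≤ 1 / 4 + 1 / 4 := add_le_add (sum_incidenceFinset_le hp x) (sum_incidenceFinset_le hp y)
    _ = 1 / 2 := by
        rw [ENNReal.div_add_div_same, ENNReal.div_eq_div_iff] <;> norm_num

variable {Ω : Type*}

variable (G) in
def markedAlone (M : Sym2 V → Set Ω) (e : Sym2 V) : Set Ω :=
  M e ∩ ⋂ f ∈ G.adjacentEdges e, (M f)ᶜ

lemma mem_markedAlone {M : Sym2 V → Set Ω} {e : Sym2 V} {ω : Ω} :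
    ω ∈ G.markedAlone M e ↔
      ω ∈ M e ∧ ∀ f ∈ G.edgeSet, f ≠ e → (∃ x, x ∈ f ∧ x ∈ e) → ω ∉ M f := by
  simp [markedAlone, mem_adjacentEdges]

lemma disjoint_markedAlone {M : Sym2 V → Set Ω} {e f : Sym2 V} (hf : f ∈ G.edgeSet)
    (hne : f ≠ e) (hfe : ∃ x, x ∈ f ∧ x ∈ e) :
    Disjoint (G.markedAlone M e) (G.markedAlone M f) :=
  Set.disjoint_left.2 fun _ hωe hωf ↦
    (mem_markedAlone.1 hωe).2 f hf hne hfe (mem_markedAlone.1 hωf).1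

variable [MeasurableSpace Ω]

lemma measurableSet_markedAlone {M : Sym2 V → Set Ω} (hM : ∀ e, MeasurableSet (M e))
    (e : Sym2 V) : MeasurableSet (G.markedAlone M e) :=
  (hM e).inter <| (G.adjacentEdges e).measurableSet_biInter fun f _ ↦ (hM f).compl

lemma le_measure_markedAlone {P : Measure Ω} {M : Sym2 V → Set Ω}
    (hM : ∀ e, MeasurableSet (M e)) (hindep : iIndepSet (fun e : G.edgeSet ↦ M e) P)
    (hprob : ∀ x y, G.Adj x y →
      P (M s(x, y)) = 1 / (4 * ((G.degree x : ℝ≥0∞) + (G.degree y : ℝ≥0∞))))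
    {x y : V} (hxy : G.Adj x y) :
    1 / (8 * ((G.degree x : ℝ≥0∞) + (G.degree y : ℝ≥0∞))) ≤ P (G.markedAlone M s(x, y)) := by
  have hnot : (⟨s(x, y), hxy⟩ : G.edgeSet) ∉ G.adjacentEdges s(x, y) := by
    simp [mem_adjacentEdges]
  have hsum := sum_adjacentEdges_le (p := fun e ↦ P (M e)) (fun a b h ↦ (hprob a b h).le) x y
  calc 1 / (8 * ((G.degree x : ℝ≥0∞) + (G.degree y : ℝ≥0∞)))
      = P (M s(x, y)) * (1 - 1 / 2) := by
        rw [hprob x y hxy, one_div 2, ENNReal.one_sub_inv_two, one_div, one_div,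
          ← ENNReal.mul_inv (by simp) (by simp), mul_comm _ (2 : ℝ≥0∞), ← mul_assoc]
        norm_num
    _ ≤ P (M s(x, y)) * (1 - ∑ f ∈ G.adjacentEdges s(x, y), P (M f)) := by gcongr
    _ ≤ P (M s(x, y)) * ∏ f ∈ G.adjacentEdges s(x, y), (1 - P (M f)) := by
        gcongr; exact ENNReal.one_sub_sum_le_prod_one_sub _ _
    _ = P (G.markedAlone M s(x, y)) :=
        (hindep.measure_inter_biInter_compl (fun f ↦ hM f) hnot).symm

end SimpleGraph

open Classical in
theorem stmt13_general {V : Type*} [Fintype V] [DecidableEq V] (G : SimpleGraph V)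
    [DecidableRel G.Adj] {Ω : Type*} [MeasurableSpace Ω]
    (P : MeasureTheory.Measure Ω)
    (M : Sym2 V → Set Ω) (hmeas : ∀ e, MeasurableSet (M e))
    (hindep : ProbabilityTheory.iIndepSet (fun e : G.edgeSet => M e) P)
    (hprob : ∀ u v : V, G.Adj u v →
      P (M s(u, v)) = 1 / (4 * ((G.degree u : ENNReal) + (G.degree v : ENNReal))))
    (v : V) (hdegv : 1 ≤ G.degree v)
    (hgood : G.degree v ≤ 3 * ((G.neighborFinset v).filter
        (fun u => G.degree u ≤ G.degree v)).card) :
    (1 : ENNReal) / 100 ≤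
      P {ω : Ω | ∃ u : V, G.Adj v u ∧ ω ∈ M s(v, u) ∧
          ∀ e' ∈ G.edgeSet, e' ≠ s(v, u) →
            (∃ x : V, x ∈ e' ∧ x ∈ s(v, u)) → ω ∉ M e'} := by
  set S := (G.neighborFinset v).filter (fun u => G.degree u ≤ G.degree v)
  have hS : ∀ u ∈ S, G.Adj v u ∧ G.degree u ≤ G.degree v := by simp [S]
  have hA : ∀ u ∈ S, 1 / (16 * (G.degree v : ℝ≥0∞)) ≤ P (G.markedAlone M s(v, u)) := by
    intro u hu
    refine le_trans (ENNReal.div_le_div_left ?_ 1)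
      (G.le_measure_markedAlone hmeas hindep hprob (hS u hu).1)
    calc 8 * ((G.degree v : ℝ≥0∞) + G.degree u) ≤ 8 * (G.degree v + G.degree v) := by
          gcongr; exact_mod_cast (hS u hu).2
      _ = 16 * G.degree v := by ring
  have hdisj : (S : Set V).PairwiseDisjoint fun u ↦ G.markedAlone M s(v, u) := by
    intro u _ u' hu' hne
    refine G.disjoint_markedAlone (G.mem_edgeSet.2 (hS u' hu').1) ?_ ⟨v, by simp, by simp⟩
    exact fun h ↦ hne (Sym2.congr_right.1 h).symm
  calc (1 : ℝ≥0∞) / 100 ≤ #S * (1 / (16 * (G.degree v : ℝ≥0∞))) := by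
        have hdv : (G.degree v : ℝ≥0∞) ≠ 0 := Nat.cast_ne_zero.2 (by omega)
        rw [mul_one_div, ENNReal.le_div_iff_mul_le (by simp [hdv]) (by simp), one_div,
          ENNReal.inv_mul_le_iff (by norm_num) (by norm_num)]
        exact_mod_cast (by omega : 16 * G.degree v ≤ 100 * #S)
    _ ≤ ∑ u ∈ S, P (G.markedAlone M s(v, u)) := by
        simpa using card_nsmul_le_sum S _ _ hA
    _ = P (⋃ u ∈ S, G.markedAlone M s(v, u)) :=
        (measure_biUnion_finset hdisj fun u _ ↦ G.measurableSet_markedAlone hmeas _).symm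
    _ ≤ _ := by
        refine measure_mono fun ω hω ↦ ?_
        obtain ⟨u, hu, hωu⟩ := Set.mem_iUnion₂.1 hω
        exact ⟨u, (hS u hu).1, SimpleGraph.mem_markedAlone.1 hωu⟩

open Classical in
/-- Mark each edge `e = {u,v}` of a finite simple graph `G` independently with probability
exactly `1/(4(deg u + deg v))` (the marking events, indexed by the edges, are mutually
independent). If `v` is a vertex of degree at least 1 such that at least `deg(v)/3` of its
neighbors have degree at most `deg(v)`, then with probability at least `1/100` some edge
incident to `v` is marked while no other edge sharing an endpoint with it is marked. -/
theorem stmt13 {V : Type*} [Fintype V] [DecidableEq V] (G : SimpleGraph V)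
    [DecidableRel G.Adj] {Ω : Type*} [MeasurableSpace Ω]
    (P : MeasureTheory.Measure Ω) [MeasureTheory.IsProbabilityMeasure P]
    (M : Sym2 V → Set Ω) (hmeas : ∀ e, MeasurableSet (M e))
    (hindep : ProbabilityTheory.iIndepSet (fun e : G.edgeSet => M e) P)
    (hprob : ∀ u v : V, G.Adj u v →
      P (M s(u, v)) = 1 / (4 * ((G.degree u : ENNReal) + (G.degree v : ENNReal))))
    (v : V) (hdegv : 1 ≤ G.degree v)
    (hgood : G.degree v ≤ 3 * ((G.neighborFinset v).filter
        (fun u => G.degree u ≤ G.degree v)).card) :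
    (1 : ENNReal) / 100 ≤
      P {ω : Ω | ∃ u : V, G.Adj v u ∧ ω ∈ M s(v, u) ∧
          ∀ e' ∈ G.edgeSet, e' ≠ s(v, u) →
            (∃ x : V, x ∈ e' ∧ x ∈ s(v, u)) → ω ∉ M e'} :=
  stmt13_general G P M hmeas hindep hprob v hdegv hgood
end
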